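/- The Mostar index of the Fibonacci cube Γ_n (n ≥ 2) equals the sum over k from 1 to n of f_k * f_{n-k+1} * (f_{k+1} * f_{n-k+2} - f_k * f_{n-k+1}). -/

import Mathlib

open Finset

def noConsec (n : ℕ) (b : Fin n → Bool) : Prop :=
  ∀ i j : Fin n, (j : ℕ) = (i : ℕ) + 1 → ¬(b i = true ∧ b j = true)

instance (n : ℕ) : DecidablePred (noConsec n) := fun _ => by
  unfold noConsec; infer_instance

/-- Vertices of the Fibonacci cube Γ_n. -/
def FibVertex (n : ℕ) := {b : Fin n → Bool // noConsec n b}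

instance (n : ℕ) : Fintype (FibVertex n) := Subtype.fintype _
instance (n : ℕ) : DecidableEq (FibVertex n) := Subtype.instDecidableEq

/-- Number of vertices of Γ_n strictly closer to `u` than to `v`
(graph distance in Γ_n coincides with Hamming distance). -/
def closer (n : ℕ) (u v : FibVertex n) : ℕ :=
  ((univ : Finset (FibVertex n)).filter
    (fun w => hammingDist w.1 u.1 < hammingDist w.1 v.1)).card


----------------------------------------------------------------
-- auxiliary
----------------------------------------------------------------

lemma noConsec_iff (n : ℕ) (b : Fin n → Bool) :
    noConsec n b ↔ ∀ t : ℕ, ∀ h : t + 1 < n,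
      ¬(b ⟨t, by omega⟩ = true ∧ b ⟨t + 1, h⟩ = true) := by
  constructor
  · intro hb t h
    exact hb ⟨t, by omega⟩ ⟨t + 1, h⟩ rfl
  · intro hb i j hij
    have h : (i : ℕ) + 1 < n := by omega
    have := hb i h
    have hi : (⟨(i : ℕ), by omega⟩ : Fin n) = i := by ext; rfl
    have hj : (⟨(i : ℕ) + 1, h⟩ : Fin n) = j := by
      apply Fin.ext; simp [hij]
    rwa [hi, hj] at this

/-- valid strings of length m -/
def VS (m : ℕ) : Finset (Fin m → Bool) := univ.filter (noConsec m)

/-- valid strings of length m whose first bit is false (if any) -/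
def VS0 (m : ℕ) : Finset (Fin m → Bool) :=
  univ.filter (fun b => noConsec m b ∧ ∀ h : 0 < m, b ⟨0, h⟩ = false)

/-- valid strings of length m whose last bit is false (if any) -/
def VSL (m : ℕ) : Finset (Fin m → Bool) :=
  univ.filter (fun b => noConsec m b ∧ ∀ h : 0 < m, b ⟨m - 1, by omega⟩ = false)

lemma cons_at_succ (m : ℕ) (a : Bool) (b : Fin m → Bool) (t : ℕ) (h : t + 1 < m + 1) :
    (Fin.cons a b : Fin (m + 1) → Bool) ⟨t + 1, h⟩ = b ⟨t, by omega⟩ := by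
  have e : (⟨t + 1, h⟩ : Fin (m + 1)) = Fin.succ ⟨t, by omega⟩ := rfl
  rw [e, Fin.cons_succ]

lemma cons_at_zero (m : ℕ) (a : Bool) (b : Fin m → Bool) (h : 0 < m + 1) :
    (Fin.cons a b : Fin (m + 1) → Bool) ⟨0, h⟩ = a := by
  have e : (⟨0, h⟩ : Fin (m + 1)) = 0 := rfl
  rw [e, Fin.cons_zero]

lemma noConsec_cons (m : ℕ) (a : Bool) (b : Fin m → Bool) :
    noConsec (m + 1) (Fin.cons a b) ↔
      noConsec m b ∧ (a = true → ∀ h : 0 < m, b ⟨0, h⟩ = false) := by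
  rw [noConsec_iff]
  constructor
  · intro hb
    constructor
    · rw [noConsec_iff]
      intro t h
      have := hb (t + 1) (by omega)
      rwa [cons_at_succ, cons_at_succ] at this
    · intro ha h
      have := hb 0 (by omega)
      rw [cons_at_zero, cons_at_succ] at this
      cases hb0 : b ⟨0, h⟩
      · rfl
      · exact absurd ⟨ha, hb0⟩ this
  · rintro ⟨hb, ha⟩ t h hc
    match t with
    | 0 =>
      rw [cons_at_zero, cons_at_succ] at hc
      have h1 := ha hc.1 (by omega)
      rw [hc.2] at h1
      simp at h1
    | Nat.succ s =>
      rw [cons_at_succ, cons_at_succ] at hc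
      exact (noConsec_iff m b).mp hb s (by omega) hc

lemma tail_noConsec (m : ℕ) (c : Fin (m + 1) → Bool) (hc : noConsec (m + 1) c) :
    noConsec m (Fin.tail c) := by
  have := (noConsec_cons m (c 0) (Fin.tail c)).mp (by rwa [Fin.cons_self_tail])
  exact this.1

lemma card_VS0 (m : ℕ) : (VS0 (m + 1)).card = (VS m).card := by
  apply Finset.card_nbij' (fun c => Fin.tail c) (fun b => Fin.cons false b)
  · intro c hc
    simp only [VS0, VS, Finset.mem_coe, Finset.mem_filter, Finset.mem_univ, true_and] at hc ⊢
    exact tail_noConsec m c hc.1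
  · intro b hb
    simp only [VS0, VS, Finset.mem_coe, Finset.mem_filter, Finset.mem_univ, true_and] at hb ⊢
    refine ⟨(noConsec_cons m false b).mpr ⟨hb, by simp⟩, fun h => ?_⟩
    rw [cons_at_zero]
  · intro c hc
    simp only [VS0, Finset.mem_coe, Finset.mem_filter, Finset.mem_univ, true_and] at hc
    have h0 : c 0 = false := hc.2 (by omega)
    conv_rhs => rw [← Fin.cons_self_tail c]
    rw [h0]
  · intro b _
    funext j
    simp [Fin.tail, Fin.cons_succ]

lemma VS_succ_eq (m : ℕ) :
    VS (m + 1) = VS0 (m + 1) ∪ (VS0 m).image (fun b => Fin.cons true b) := by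
  ext c
  simp only [VS, VS0, mem_union, mem_filter, mem_univ, true_and, mem_image]
  constructor
  · intro hc
    cases h0 : c 0 with
    | false =>
      left
      exact ⟨hc, fun h => h0⟩
    | true =>
      right
      refine ⟨Fin.tail c, ⟨tail_noConsec m c hc, fun h => ?_⟩, by rw [← h0, Fin.cons_self_tail]⟩
      have := (noConsec_cons m (c 0) (Fin.tail c)).mp (by rwa [Fin.cons_self_tail])
      exact this.2 h0 h
  · rintro (⟨h1, _⟩ | ⟨b, ⟨hb1, hb2⟩, rfl⟩)
    · exact h1
    · exact (noConsec_cons m true b).mpr ⟨hb1, fun _ => hb2⟩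

lemma card_VS_succ (m : ℕ) : (VS (m + 1)).card = (VS m).card + (VS0 m).card := by
  rw [VS_succ_eq, card_union_of_disjoint, card_VS0,
    Finset.card_image_of_injective _ (Fin.cons_right_injective (α := fun _ : Fin (m + 1) => Bool) true)]
  rw [Finset.disjoint_left]
  intro c hc hc2
  simp only [mem_image] at hc2
  obtain ⟨b, _, rfl⟩ := hc2
  simp only [VS0, mem_filter, mem_univ, true_and] at hc
  have := hc.2 (by omega)
  rw [cons_at_zero] at this
  simp at this

lemma card_VS_and_VS0 (m : ℕ) :
    (VS m).card = Nat.fib (m + 2) ∧ (VS0 m).card = Nat.fib (m + 1) := by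
  induction m with
  | zero => constructor <;> decide
  | succ k ih =>
    refine ⟨?_, ?_⟩
    · rw [card_VS_succ, ih.1, ih.2]
      have : Nat.fib (k + 1 + 2) = Nat.fib (k + 1) + Nat.fib (k + 1 + 1) := Nat.fib_add_two
      have : Nat.fib (k + 1 + 1) = Nat.fib (k + 2) := rfl
      omega
    · rw [card_VS0, ih.1]

lemma card_VS (m : ℕ) : (VS m).card = Nat.fib (m + 2) := (card_VS_and_VS0 m).1

lemma card_VS0' (m : ℕ) : (VS0 m).card = Nat.fib (m + 1) := (card_VS_and_VS0 m).2

def revf (m : ℕ) (b : Fin m → Bool) : Fin m → Bool := fun j => b j.rev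

lemma apply_congr (m : ℕ) (b : Fin m → Bool) {t s : ℕ} (ht : t < m) (hs : s < m)
    (h : t = s) : b ⟨t, ht⟩ = b ⟨s, hs⟩ := by subst h; rfl

lemma revf_apply (m : ℕ) (b : Fin m → Bool) (t : ℕ) (h : t < m) :
    revf m b ⟨t, h⟩ = b ⟨m - 1 - t, by omega⟩ := by
  show b (Fin.rev ⟨t, h⟩) = _
  congr 1
  apply Fin.ext
  rw [Fin.val_rev]
  simp
  omega

lemma revf_revf (m : ℕ) (b : Fin m → Bool) : revf m (revf m b) = b := by
  funext j
  show b (Fin.rev (Fin.rev j)) = b j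
  rw [Fin.rev_rev]

lemma noConsec_revf (m : ℕ) (b : Fin m → Bool) (hb : noConsec m b) :
    noConsec m (revf m b) := by
  rw [noConsec_iff]
  intro t h hc
  rw [revf_apply, revf_apply] at hc
  refine (noConsec_iff m b).mp hb (m - 1 - (t + 1)) (by omega) ⟨?_, ?_⟩
  · exact hc.2
  · exact (apply_congr m b (by omega) (by omega) (by omega)).trans hc.1

lemma card_VSL (m : ℕ) : (VSL m).card = Nat.fib (m + 1) := by
  rw [← card_VS0']
  apply Finset.card_nbij' (revf m) (revf m)
  · intro c hc
    simp only [VSL, VS0, Finset.mem_coe, Finset.mem_filter, Finset.mem_univ, true_and] at hc ⊢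
    refine ⟨noConsec_revf m c hc.1, fun h => ?_⟩
    rw [revf_apply]
    exact (apply_congr m c (by omega) (by omega) (by omega)).trans (hc.2 h)
  · intro c hc
    simp only [VSL, VS0, Finset.mem_coe, Finset.mem_filter, Finset.mem_univ, true_and] at hc ⊢
    refine ⟨noConsec_revf m c hc.1, fun h => ?_⟩
    rw [revf_apply]
    exact (apply_congr m c (by omega) h (by omega)).trans (hc.2 h)
  · intro c _
    exact revf_revf m c
  · intro c _
    exact revf_revf m c

lemma card_fibVertex (n : ℕ) :
    (univ : Finset (FibVertex n)).card = Nat.fib (n + 2) := by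
  rw [Finset.card_univ, show Fintype.card (FibVertex n) = Fintype.card {b : Fin n → Bool // noConsec n b} from rfl,
    Fintype.card_subtype, ← card_VS n]
  rfl

def glue (n k : ℕ) (p : Fin k → Bool) (s : Fin (n - k - 1) → Bool) : Fin n → Bool :=
  fun j => if h : (j : ℕ) < k then p ⟨j, h⟩
    else if h2 : (j : ℕ) = k then true
    else s ⟨(j : ℕ) - k - 1, by have := j.2; omega⟩

lemma glue_lt (n k : ℕ) (p : Fin k → Bool) (s : Fin (n - k - 1) → Bool) (j : Fin n)
    (h : (j : ℕ) < k) : glue n k p s j = p ⟨j, h⟩ := by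
  unfold glue; rw [dif_pos h]

lemma glue_eq (n k : ℕ) (p : Fin k → Bool) (s : Fin (n - k - 1) → Bool) (j : Fin n)
    (h : (j : ℕ) = k) : glue n k p s j = true := by
  unfold glue; rw [dif_neg (by omega), dif_pos h]

lemma glue_gt (n k : ℕ) (p : Fin k → Bool) (s : Fin (n - k - 1) → Bool) (j : Fin n)
    (h : k < (j : ℕ)) :
    glue n k p s j = s ⟨(j : ℕ) - k - 1, by have := j.2; omega⟩ := by
  unfold glue; rw [dif_neg (by omega), dif_neg (by omega)]

lemma glue_lt' (n k : ℕ) (p : Fin k → Bool) (s : Fin (n - k - 1) → Bool) (t : ℕ)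
    (ht : t < n) (h : t < k) : glue n k p s ⟨t, ht⟩ = p ⟨t, h⟩ :=
  glue_lt n k p s ⟨t, ht⟩ h

lemma glue_eq' (n k : ℕ) (p : Fin k → Bool) (s : Fin (n - k - 1) → Bool) (t : ℕ)
    (ht : t < n) (h : t = k) : glue n k p s ⟨t, ht⟩ = true :=
  glue_eq n k p s ⟨t, ht⟩ h

lemma glue_gt' (n k : ℕ) (p : Fin k → Bool) (s : Fin (n - k - 1) → Bool) (t : ℕ)
    (ht : t < n) (h : k < t) :
    glue n k p s ⟨t, ht⟩ = s ⟨t - k - 1, by omega⟩ :=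
  glue_gt n k p s ⟨t, ht⟩ h

lemma glue_noConsec (n k : ℕ) (hkn : k < n) (p : Fin k → Bool) (s : Fin (n - k - 1) → Bool)
    (hp : noConsec k p) (hpl : ∀ h : 0 < k, p ⟨k - 1, by omega⟩ = false)
    (hs : noConsec (n - k - 1) s) (hs0 : ∀ h : 0 < n - k - 1, s ⟨0, h⟩ = false) :
    noConsec n (glue n k p s) := by
  rw [noConsec_iff]
  intro t h hc
  rcases lt_trichotomy (t + 1) k with hlt | heq | hgt
  · rw [glue_lt' n k p s t (by omega) (by omega), glue_lt' n k p s (t + 1) (by omega) hlt] at hc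
    exact (noConsec_iff k p).mp hp t hlt hc
  · rw [glue_lt' n k p s t (by omega) (by omega)] at hc
    have h1 : p ⟨k - 1, by omega⟩ = true :=
      (apply_congr k p (by omega) (by omega) (by omega)).trans hc.1
    rw [hpl (by omega)] at h1
    simp at h1
  · by_cases h2 : t = k
    · rw [glue_gt' n k p s (t + 1) (by omega) (by omega)] at hc
      have h1 : s ⟨0, by omega⟩ = true :=
        (apply_congr (n - k - 1) s (by omega) (by omega) (by omega)).trans hc.2
      rw [hs0 (by omega)] at h1
      simp at h1
    · rw [glue_gt' n k p s t (by omega) (by omega),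
        glue_gt' n k p s (t + 1) (by omega) (by omega)] at hc
      refine (noConsec_iff (n - k - 1) s).mp hs (t - k - 1) (by omega) ⟨hc.1, ?_⟩
      exact (apply_congr (n - k - 1) s (by omega) (by omega) (by omega)).trans hc.2

/-- number of vertices with a 1 in position i -/
lemma card_ones (n : ℕ) (i : Fin n) :
    ((univ : Finset (FibVertex n)).filter (fun w => w.1 i = true)).card =
      Nat.fib ((i : ℕ) + 1) * Nat.fib (n - (i : ℕ)) := by
  set k := (i : ℕ) with hk
  have hkn : k < n := i.2
  have hcard : ((univ : Finset (FibVertex n)).filter (fun w => w.1 i = true)).card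
      = (VSL k ×ˢ VS0 (n - k - 1)).card := by
    apply Finset.card_nbij'
      (fun w : FibVertex n => ((fun j : Fin k => w.1 ⟨j, by have := j.2; omega⟩,
                 fun j : Fin (n - k - 1) => w.1 ⟨k + 1 + j, by have := j.2; omega⟩) :
                 (Fin k → Bool) × (Fin (n - k - 1) → Bool)))
      (fun q => if h : noConsec n (glue n k q.1 q.2) then ⟨glue n k q.1 q.2, h⟩
                else ⟨fun _ => false, by intro a b hab hcc; simp at hcc⟩)
    · intro w hw
      simp only [Finset.mem_coe, Finset.mem_filter, Finset.mem_univ, true_and] at hw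
      have hw' : w.1 ⟨k, hkn⟩ = true := by
        rwa [show (⟨k, hkn⟩ : Fin n) = i from Fin.ext rfl]
      simp only [mem_product, VSL, VS0, Finset.mem_coe, Finset.mem_filter, Finset.mem_univ, true_and]
      refine ⟨⟨?_, ?_⟩, ?_, ?_⟩
      · rw [noConsec_iff]
        intro t ht hcc
        exact (noConsec_iff n w.1).mp w.2 t (by omega) hcc
      · intro h
        show w.1 ⟨k - 1, by omega⟩ = false
        by_contra hx
        simp only [Bool.not_eq_false] at hx
        exact (noConsec_iff n w.1).mp w.2 (k - 1) (by omega)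
          ⟨hx, (apply_congr n w.1 (by omega) hkn (by omega)).trans hw'⟩
      · rw [noConsec_iff]
        intro t ht hcc
        exact (noConsec_iff n w.1).mp w.2 (k + 1 + t) (by omega) hcc
      · intro h
        show w.1 ⟨k + 1 + 0, by omega⟩ = false
        by_contra hx
        simp only [Bool.not_eq_false] at hx
        exact (noConsec_iff n w.1).mp w.2 k (by omega) ⟨hw', hx⟩
    · rintro ⟨p, s⟩ hq
      simp only [mem_product, VSL, VS0, Finset.mem_coe, Finset.mem_filter, Finset.mem_univ, true_and] at hq
      have hg : noConsec n (glue n k p s) :=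
        glue_noConsec n k hkn p s hq.1.1 hq.1.2 hq.2.1 hq.2.2
      simp only [Finset.mem_coe, Finset.mem_filter, Finset.mem_univ, true_and]
      erw [dif_pos hg]
      show glue n k p s i = true
      exact glue_eq n k p s i rfl
    · intro w hw
      simp only [Finset.mem_coe, Finset.mem_filter, Finset.mem_univ, true_and] at hw
      have hg : glue n k (fun j : Fin k => w.1 ⟨j, by have := j.2; omega⟩)
          (fun j : Fin (n - k - 1) => w.1 ⟨k + 1 + j, by have := j.2; omega⟩) = w.1 := by
        funext j
        rcases lt_trichotomy (j : ℕ) k with h | h | h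
        · rw [glue_lt _ _ _ _ _ h]
        · rw [glue_eq _ _ _ _ _ h]
          have : j = i := Fin.ext (by omega)
          rw [this, hw]
        · rw [glue_gt _ _ _ _ _ h]
          exact congrArg w.1
            (Fin.ext (show k + 1 + ((j : ℕ) - k - 1) = (j : ℕ) by have := j.2; omega))
      dsimp only
      by_cases hcond : noConsec n (glue n k (fun j : Fin k => w.1 ⟨j, by have := j.2; omega⟩)
          (fun j : Fin (n - k - 1) => w.1 ⟨k + 1 + j, by have := j.2; omega⟩))
      · erw [dif_pos hcond]; exact Subtype.ext hg
      · exact absurd (by rw [hg]; exact w.2) hcond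
    · rintro ⟨p, s⟩ hq
      simp only [mem_product, VSL, VS0, Finset.mem_coe, Finset.mem_filter, Finset.mem_univ, true_and] at hq
      have hg : noConsec n (glue n k p s) :=
        glue_noConsec n k hkn p s hq.1.1 hq.1.2 hq.2.1 hq.2.2
      dsimp only
      erw [dif_pos hg]
      refine Prod.ext ?_ ?_
      · funext j
        show glue n k p s ⟨j, _⟩ = p j
        rw [glue_lt n k p s _ (show (((⟨(j : ℕ), by have := j.2; omega⟩ : Fin n)) : ℕ) < k from j.2)]
      · funext j
        show glue n k p s ⟨k + 1 + j, _⟩ = s j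
        rw [glue_gt n k p s _ (show k < k + 1 + (j : ℕ) by omega)]
        exact congrArg s (Fin.ext (show k + 1 + (j : ℕ) - k - 1 = (j : ℕ) by omega))
  rw [hcard, Finset.card_product, card_VSL, card_VS0',
    show n - k - 1 + 1 = n - k from by omega]

lemma hd_lt_iff {n : ℕ} (x u v : Fin n → Bool) (i : Fin n) (hne : u i ≠ v i)
    (hoff : ∀ j, j ≠ i → u j = v j) :
    (hammingDist x u < hammingDist x v ↔ x i = u i) := by
  have key : ∀ y : Fin n → Bool, hammingDist x y =
      (if x i ≠ y i then 1 else 0) +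
        ((univ.erase i).filter (fun j => x j ≠ y j)).card := by
    intro y
    show (univ.filter (fun j => x j ≠ y j)).card = _
    conv_lhs => rw [← Finset.insert_erase (Finset.mem_univ i), Finset.filter_insert]
    by_cases h : x i ≠ y i
    · rw [if_pos h, if_pos h, Finset.card_insert_of_notMem (by simp)]
      omega
    · rw [if_neg h, if_neg h, zero_add]
  rw [key u, key v]
  have heq : ((univ.erase i).filter (fun j => x j ≠ u j)) =
      ((univ.erase i).filter (fun j => x j ≠ v j)) := by
    apply filter_congr
    intro j hj
    rw [hoff j (Finset.mem_erase.mp hj).1]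
  rw [heq]
  by_cases h : x i = u i
  · have h2 : ¬(x i = v i) := fun hh => hne (h.symm.trans hh)
    rw [if_neg (by simp [h]), if_pos (by simpa using h2)]
    simp [h]
  · have h2 : x i = v i := by
      cases hx : x i <;> cases hu : u i <;> cases hv : v i <;> simp_all
    rw [if_pos (by simpa using h), if_neg (by simp [h2])]
    have h3 : ¬(1 + ((univ.erase i).filter (fun j => x j ≠ v j)).card <
        0 + ((univ.erase i).filter (fun j => x j ≠ v j)).card) := by omega
    simp [h3, h]

lemma closer_formula (n : ℕ) (u v : FibVertex n) (i : Fin n) (hne : u.1 i ≠ v.1 i)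
    (hoff : ∀ j, j ≠ i → u.1 j = v.1 j) :
    closer n u v = ((univ : Finset (FibVertex n)).filter (fun w => w.1 i = u.1 i)).card := by
  unfold closer
  congr 1
  apply filter_congr
  intro w _
  exact hd_lt_iff w.1 u.1 v.1 i hne hoff

lemma closer_add (n : ℕ) (u v : FibVertex n) (i : Fin n) (hne : u.1 i ≠ v.1 i)
    (hoff : ∀ j, j ≠ i → u.1 j = v.1 j) :
    closer n u v + closer n v u = Nat.fib (n + 2) := by
  rw [closer_formula n u v i hne hoff,
    closer_formula n v u i (Ne.symm hne) (fun j hj => (hoff j hj).symm), ← card_fibVertex n]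
  have hpart := Finset.card_filter_add_card_filter_not (s := (univ : Finset (FibVertex n)))
    (p := fun w : FibVertex n => w.1 i = u.1 i)
  rw [← hpart]
  congr 1
  congr 1
  apply filter_congr
  intro w _
  cases hw : w.1 i <;> cases hu : u.1 i <;> cases hv : v.1 i <;> simp_all

lemma fib_identity (n x : ℕ) (hx : x < n) :
    Nat.fib (n + 2) = Nat.fib (x + 1) * Nat.fib (n - x) +
      Nat.fib (x + 2) * Nat.fib (n - x + 1) := by
  have h1 := Nat.fib_add (x + 1) (n - x)
  rw [show x + 1 + (n - x) + 1 = n + 2 from by omega] at h1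
  exact h1

lemma abs_closer (n : ℕ) (u v : FibVertex n) (i : Fin n) (hne : u.1 i ≠ v.1 i)
    (hoff : ∀ j, j ≠ i → u.1 j = v.1 j) :
    |(closer n u v : ℤ) - closer n v u| =
      (Nat.fib (n + 2) : ℤ) -
        2 * ((Nat.fib ((i : ℕ) + 1) * Nat.fib (n - (i : ℕ)) : ℕ) : ℤ) := by
  have hT := closer_add n u v i hne hoff
  have hA2 : 2 * (Nat.fib ((i : ℕ) + 1) * Nat.fib (n - (i : ℕ))) ≤ Nat.fib (n + 2) := by
    have hid := fib_identity n (i : ℕ) i.2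
    have hmono : Nat.fib ((i : ℕ) + 1) * Nat.fib (n - (i : ℕ)) ≤
        Nat.fib ((i : ℕ) + 2) * Nat.fib (n - (i : ℕ) + 1) :=
      Nat.mul_le_mul (Nat.fib_le_fib_succ) (Nat.fib_mono (by omega))
    omega
  have hval : closer n u v = Nat.fib ((i : ℕ) + 1) * Nat.fib (n - (i : ℕ)) ∨
      closer n v u = Nat.fib ((i : ℕ) + 1) * Nat.fib (n - (i : ℕ)) := by
    cases hu : u.1 i
    · right
      have hv : v.1 i = true := by
        cases hv : v.1 i
        · exact absurd (hu.trans hv.symm) hne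
        · rfl
      rw [closer_formula n v u i (Ne.symm hne) (fun j hj => (hoff j hj).symm), ← card_ones n i]
      congr 1
      apply filter_congr
      intro w _
      rw [hv]
    · left
      rw [closer_formula n u v i hne hoff, ← card_ones n i]
      congr 1
      apply filter_congr
      intro w _
      rw [hu]
  rcases hval with h | h <;>
    rcases abs_cases ((closer n u v : ℤ) - closer n v u) with ⟨h1, h2⟩ | ⟨h1, h2⟩ <;>
    omega

def flipv (n : ℕ) (i : Fin n) (u : FibVertex n) : FibVertex n :=
  ⟨Function.update u.1 i false, by
    intro a b hab hc
    by_cases ha : a = i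
    · rw [ha, Function.update_self] at hc
      simp at hc
    · by_cases hb2 : b = i
      · rw [hb2, Function.update_self] at hc
        simp at hc
      · rw [Function.update_of_ne ha, Function.update_of_ne hb2] at hc
        exact u.2 a b hab hc⟩

def Pd (n : ℕ) (i : Fin n) (u v : FibVertex n) : Prop :=
  u.1 i ≠ v.1 i ∧ ∀ j, j ≠ i → u.1 j = v.1 j

instance (n : ℕ) (i : Fin n) (u v : FibVertex n) : Decidable (Pd n i u v) := by
  unfold Pd; infer_instance

lemma Pd_symm (n : ℕ) (i : Fin n) (u v : FibVertex n) : Pd n i u v ↔ Pd n i v u := by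
  unfold Pd
  constructor <;> rintro ⟨h1, h2⟩ <;> exact ⟨Ne.symm h1, fun j hj => (h2 j hj).symm⟩

lemma Pd_flip (n : ℕ) (i : Fin n) (u : FibVertex n) (hu : u.1 i = true) (v : FibVertex n) :
    Pd n i u v ↔ v = flipv n i u := by
  constructor
  · rintro ⟨hne, hoff⟩
    apply Subtype.ext
    funext j
    by_cases hj : j = i
    · subst hj
      show v.1 j = Function.update u.1 j false j
      rw [Function.update_self]
      cases hv : v.1 j
      · rfl
      · exact absurd (hu.trans hv.symm) hne
    · show v.1 j = Function.update u.1 i false j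
      rw [Function.update_of_ne hj]
      exact (hoff j hj).symm
  · rintro rfl
    refine ⟨?_, ?_⟩
    · show u.1 i ≠ Function.update u.1 i false i
      rw [Function.update_self, hu]
      simp
    · intro j hj
      show u.1 j = Function.update u.1 i false j
      rw [Function.update_of_ne hj]

/-- The Mostar index of Γ_n: each edge `uv` (pairs at Hamming distance 1) appears twice in the
ordered double sum, hence the factor 2 on the right-hand side. -/
theorem mostar_fibonacci_cube (n : ℕ) (hn : 2 ≤ n) :
    ∑ u : FibVertex n, ∑ v : FibVertex n,
      (if hammingDist u.1 v.1 = 1 then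
        |(closer n u v : ℤ) - (closer n v u : ℤ)| else 0) =
      2 * ∑ k ∈ Icc 1 n, (Nat.fib k * Nat.fib (n - k + 1) : ℤ) *
        ((Nat.fib (k + 1) : ℤ) * Nat.fib (n - k + 2) -
          (Nat.fib k : ℤ) * Nat.fib (n - k + 1)) := by
  have step1 : ∀ u v : FibVertex n,
      (if hammingDist u.1 v.1 = 1 then |(closer n u v : ℤ) - (closer n v u : ℤ)| else 0)
      = ∑ i : Fin n, if Pd n i u v then
          ((Nat.fib (n + 2) : ℤ) -
            2 * ((Nat.fib ((i : ℕ) + 1) * Nat.fib (n - (i : ℕ)) : ℕ) : ℤ)) else 0 := by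
    intro u v
    by_cases hd : hammingDist u.1 v.1 = 1
    · have hd' : (univ.filter (fun j => u.1 j ≠ v.1 j)).card = 1 := hd
      obtain ⟨i, hi⟩ := Finset.card_eq_one.mp hd'
      have hne : u.1 i ≠ v.1 i := by
        have hmem : i ∈ univ.filter (fun j => u.1 j ≠ v.1 j) := by
          rw [hi]; exact Finset.mem_singleton_self i
        exact (Finset.mem_filter.mp hmem).2
      have hoff : ∀ j, j ≠ i → u.1 j = v.1 j := by
        intro j hj
        by_contra hx
        have hmem : j ∈ univ.filter (fun j => u.1 j ≠ v.1 j) :=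
          Finset.mem_filter.mpr ⟨mem_univ j, hx⟩
        rw [hi, Finset.mem_singleton] at hmem
        exact hj hmem
      rw [if_pos hd, Finset.sum_eq_single_of_mem i (Finset.mem_univ i)
        (fun j _ hji => if_neg (fun hc => hc.1 (hoff j hji))),
        if_pos (show Pd n i u v from ⟨hne, hoff⟩)]
      exact abs_closer n u v i hne hoff
    · rw [if_neg hd]
      symm
      apply Finset.sum_eq_zero
      intro i _
      rw [if_neg]
      rintro ⟨hne, hoff⟩
      apply hd
      show (univ.filter (fun j => u.1 j ≠ v.1 j)).card = 1
      have hset : univ.filter (fun j => u.1 j ≠ v.1 j) = {i} := by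
        ext j
        simp only [Finset.mem_filter, mem_univ, true_and, Finset.mem_singleton]
        constructor
        · intro hj
          by_contra hx
          exact hj (hoff j hx)
        · rintro rfl
          exact hne
      rw [hset, Finset.card_singleton]
  have step3 : ∀ (i : Fin n) (C : ℤ),
      (∑ u : FibVertex n, ∑ v : FibVertex n, if Pd n i u v then C else 0)
        = 2 * ((Nat.fib ((i : ℕ) + 1) * Nat.fib (n - (i : ℕ)) : ℕ) : ℤ) * C := by
    intro i C
    have key : ∀ u : FibVertex n,
        (∑ v : FibVertex n, if Pd n i u v ∧ u.1 i = true then C else 0)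
        = if u.1 i = true then C else 0 := by
      intro u
      by_cases hu : u.1 i = true
      · rw [if_pos hu]
        calc (∑ v : FibVertex n, if Pd n i u v ∧ u.1 i = true then C else 0)
            = ∑ v : FibVertex n, if v = flipv n i u then C else 0 := by
              apply Finset.sum_congr rfl
              intro v _
              apply if_congr _ rfl rfl
              rw [and_iff_left hu]
              exact Pd_flip n i u hu v
          _ = C := by
              rw [Finset.sum_ite_eq' univ (flipv n i u) (fun _ => C), if_pos (mem_univ _)]
      · rw [if_neg hu]
        apply Finset.sum_eq_zero
        intro v _
        exact if_neg (fun hc => hu hc.2)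
    have first : (∑ u : FibVertex n, ∑ v : FibVertex n,
          if Pd n i u v ∧ u.1 i = true then C else 0)
        = ((Nat.fib ((i : ℕ) + 1) * Nat.fib (n - (i : ℕ)) : ℕ) : ℤ) * C := by
      rw [Finset.sum_congr rfl (fun u _ => key u), ← Finset.sum_filter,
        Finset.sum_const, card_ones n i]
      simp [nsmul_eq_mul]
    have second : (∑ u : FibVertex n, ∑ v : FibVertex n,
          if Pd n i u v ∧ v.1 i = true then C else 0)
        = ((Nat.fib ((i : ℕ) + 1) * Nat.fib (n - (i : ℕ)) : ℕ) : ℤ) * C := by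
      rw [Finset.sum_comm]
      calc (∑ v : FibVertex n, ∑ u : FibVertex n,
            if Pd n i u v ∧ v.1 i = true then C else 0)
          = ∑ v : FibVertex n, ∑ u : FibVertex n,
            (if Pd n i v u ∧ v.1 i = true then C else 0) := by
            apply Finset.sum_congr rfl
            intro v _
            apply Finset.sum_congr rfl
            intro u _
            exact if_congr (and_congr_left' (Pd_symm n i u v)) rfl rfl
        _ = _ := first
    have split : (∑ u : FibVertex n, ∑ v : FibVertex n, if Pd n i u v then C else 0)
        = (∑ u : FibVertex n, ∑ v : FibVertex n, if Pd n i u v ∧ u.1 i = true then C else 0)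
          + (∑ u : FibVertex n, ∑ v : FibVertex n,
              if Pd n i u v ∧ v.1 i = true then C else 0) := by
      rw [← Finset.sum_add_distrib]
      apply Finset.sum_congr rfl
      intro u _
      rw [← Finset.sum_add_distrib]
      apply Finset.sum_congr rfl
      intro v _
      by_cases h : Pd n i u v
      · cases hu : u.1 i
        · have hv : v.1 i = true := by
            cases hv : v.1 i
            · exact absurd (hu.trans hv.symm) h.1
            · rfl
          rw [if_pos h, if_neg (by simp), if_pos ⟨h, hv⟩]
          ring
        · rw [if_pos h, if_pos ⟨h, rfl⟩]
          have hv : v.1 i = false := by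
            cases hv : v.1 i
            · rfl
            · exact absurd (hu.trans hv.symm) h.1
          rw [if_neg (by simp [hv])]
          ring
      · rw [if_neg h, if_neg (fun hc => h hc.1), if_neg (fun hc => h hc.1)]
        ring
    rw [split, first, second]
    ring
  calc (∑ u : FibVertex n, ∑ v : FibVertex n,
        if hammingDist u.1 v.1 = 1 then |(closer n u v : ℤ) - (closer n v u : ℤ)| else 0)
      = ∑ u : FibVertex n, ∑ v : FibVertex n, ∑ i : Fin n,
          (if Pd n i u v then ((Nat.fib (n + 2) : ℤ) -
            2 * ((Nat.fib ((i : ℕ) + 1) * Nat.fib (n - (i : ℕ)) : ℕ) : ℤ)) else 0) :=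
        Finset.sum_congr rfl fun u _ => Finset.sum_congr rfl fun v _ => step1 u v
    _ = ∑ u : FibVertex n, ∑ i : Fin n, ∑ v : FibVertex n,
          (if Pd n i u v then ((Nat.fib (n + 2) : ℤ) -
            2 * ((Nat.fib ((i : ℕ) + 1) * Nat.fib (n - (i : ℕ)) : ℕ) : ℤ)) else 0) :=
        Finset.sum_congr rfl fun u _ => Finset.sum_comm
    _ = ∑ i : Fin n, ∑ u : FibVertex n, ∑ v : FibVertex n,
          (if Pd n i u v then ((Nat.fib (n + 2) : ℤ) -
            2 * ((Nat.fib ((i : ℕ) + 1) * Nat.fib (n - (i : ℕ)) : ℕ) : ℤ)) else 0) :=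
        Finset.sum_comm
    _ = ∑ i : Fin n, 2 * ((Nat.fib ((i : ℕ) + 1) * Nat.fib (n - (i : ℕ)) : ℕ) : ℤ) *
          ((Nat.fib (n + 2) : ℤ) -
            2 * ((Nat.fib ((i : ℕ) + 1) * Nat.fib (n - (i : ℕ)) : ℕ) : ℤ)) :=
        Finset.sum_congr rfl fun i _ => step3 i _
    _ = ∑ x ∈ Finset.range n, 2 * ((Nat.fib (x + 1) * Nat.fib (n - x) : ℕ) : ℤ) *
          ((Nat.fib (n + 2) : ℤ) - 2 * ((Nat.fib (x + 1) * Nat.fib (n - x) : ℕ) : ℤ)) :=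
        Fin.sum_univ_eq_sum_range (fun x => 2 * ((Nat.fib (x + 1) * Nat.fib (n - x) : ℕ) : ℤ) *
          ((Nat.fib (n + 2) : ℤ) - 2 * ((Nat.fib (x + 1) * Nat.fib (n - x) : ℕ) : ℤ))) n
    _ = 2 * ∑ k ∈ Icc 1 n, (Nat.fib k * Nat.fib (n - k + 1) : ℤ) *
          ((Nat.fib (k + 1) : ℤ) * Nat.fib (n - k + 2) -
            (Nat.fib k : ℤ) * Nat.fib (n - k + 1)) := by
        rw [Finset.mul_sum]
        refine Finset.sum_nbij' (fun x => x + 1) (fun k => k - 1) ?_ ?_ ?_ ?_ ?_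
        · intro x hx
          simp only [Finset.mem_range] at hx
          simp only [Finset.mem_Icc]
          omega
        · intro k hk
          simp only [Finset.mem_Icc] at hk
          simp only [Finset.mem_range]
          omega
        · intro x _
          show x + 1 - 1 = x
          omega
        · intro k hk
          simp only [Finset.mem_Icc] at hk
          show k - 1 + 1 = k
          omega
        · intro x hx
          simp only [Finset.mem_range] at hx
          have e1 : n - (x + 1) + 1 = n - x := by omega
          have e2 : n - (x + 1) + 2 = n - x + 1 := by omega
          rw [e1, e2]
          have hid := fib_identity n x hx
          have hidz : (Nat.fib (n + 2) : ℤ) = (Nat.fib (x + 1) : ℤ) * Nat.fib (n - x) +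
              (Nat.fib (x + 2) : ℤ) * Nat.fib (n - x + 1) := by exact_mod_cast hid
          push_cast
          rw [show x + 1 + 1 = x + 2 from rfl]
          rw [hidz]
          ring
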